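/- Lemma (Gaussian weight estimates along dynamic characteristics). Let g, β, T > 0 and D ≥ 0. Let Φ : ℝ²×[0,∞) → ℝ and Ψ : [0,T] × (ℝ²×[0,∞)) → ℝ be C¹ with Φ(x∥, 0) = 0 and Ψ(s, x∥, 0) = 0 for all x∥ and s, with ‖∇ₓΦ‖_{L∞} + sup_{s∈[0,T]} ‖∇ₓΨ(s)‖_{L∞} ≤ g/2 and |∂ₜΨ(s,y)| ≤ D for all (s,y). Fix t ∈ [0,T], (x,v) with x₃ ≥ 0, and let (𝒳, 𝒱) : [t−τ_B, t+τ_F] → (ℝ²×[0,∞)) × ℝ³ (with [t−τ_B, t+τ_F] ⊆ [0,T], τ_B, τ_F ≥ 0) solve 𝒳' = 𝒱, 𝒱'(s) = −∇ₓΨ(s, 𝒳(s)) − ∇ₓΦ(𝒳(s)) − g e₃, with 𝒳(t) = x, 𝒱(t) = v and 𝒳₃(s) ≥ 0 for all s in the interval. Define ŵ_β(s, y, u) := exp( β( |u|² + 2Φ(y) + 2Ψ(s,y) + 2g y₃ ) ). Then for all s, s' ∈ [t−τ_B, t+τ_F]: (a) ŵ_β(s', 𝒳(s'), 𝒱(s'))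 / ŵ_β(s, 𝒳(s), 𝒱(s)) ≤ exp( (8β/g) D √(v₃² + g x₃) ); (b) 1 / ŵ_β(s, 𝒳(s), 𝒱(s)) ≤ exp( (64β/g²) D² ) · exp( −(β/2)|v|² ) · exp( −(β/2) g x₃ ). -/

import Mathlib

/-!
Along the characteristic, `E(σ) = |𝒱|² + 2Φ(𝒳) + 2Ψ(σ, 𝒳) + 2g𝒳₃` changes only through the
explicit time dependence of `Ψ`, so `|E q - E p| ≤ 2D|q - p|`. Since `Ψ` is only assumed separately
differentiable in time and in space, this is proved by a Dini-derivative argument: at each `σ₀`,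
freezing `Ψ` at time `σ₀` gives an energy whose derivative at `σ₀` vanishes (conservation of
energy), and the error made by freezing is at most `2D|σ - σ₀|`.

Since `|∇Φ| + |∇Ψ| ≤ g/2`, the vertical acceleration is at most `-g/2`, so `𝒳₃` lies below a
downward parabola through `(t, x₃)` with slope `v₃`; as `𝒳₃ ≥ 0`, the characteristic lives in a time
window of length at most `(4/g)√(v₃² + g x₃)`. This gives (a). For (b), the boundary conditions
and the gradient bound give `E(t) ≥ |v|² + g x₃`, and in the bound on `E(t) - E(s)` behind (a)
AM-GM absorbs the square root into `64D²/g²` and half of `|v|² + g x₃`.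
-/

open MeasureTheory Real Set

noncomputable section

abbrev V3 : Type := Fin 3 → ℝ

/-- Squared Euclidean length `|v|²`. -/
def sq3 (v : V3) : ℝ := ∑ i, (v i) ^ 2

/-- Partial derivative of a scalar function in the `i`-th coordinate direction. -/
def pd (i : Fin 3) (f : V3 → ℝ) (x : V3) : ℝ := fderiv ℝ f x (Pi.single i 1)

/-- Euclidean norm of the gradient. -/
def gradNorm (f : V3 → ℝ) (x : V3) : ℝ := Real.sqrt (∑ i, (pd i f x) ^ 2)

/-- The dynamic Gaussian weight `ŵ_β(s,y,u) = exp(β(|u|² + 2Φ(y) + 2Ψ(s,y) + 2g y₃))`. -/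
def wdynW (β g : ℝ) (Φ : V3 → ℝ) (Ψ : ℝ → V3 → ℝ) (s : ℝ) (y u : V3) : ℝ :=
  Real.exp (β * (sq3 u + 2 * Φ y + 2 * Ψ s y + 2 * g * y 2))

open Filter Topology

lemma sub_le_of_right_increment_le {f : ℝ → ℝ} {a b C : ℝ} (hab : a ≤ b)
    (hf : ContinuousOn f (Icc a b))
    (hloc : ∀ σ ∈ Ico a b, ∃ M : ℝ → ℝ, HasDerivWithinAt M 0 (Ioi σ) σ ∧
      ∀ᶠ z in 𝓝[>] σ, f z - f σ ≤ M z - M σ + C * (z - σ)) :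
    f b - f a ≤ C * (b - a) := by
  have hB : ∀ σ ∈ Ico a b, HasDerivWithinAt (fun z => f a + C * (z - a)) C (Ici σ) σ :=
    fun σ _ => by
      simpa using (((hasDerivWithinAt_id σ (Ici σ)).sub_const a).const_mul C).const_add (f a)
  suffices f b ≤ f a + C * (b - a) by linarith
  refine image_le_of_liminf_slope_right_le_deriv_boundary hf (by simp) (by fun_prop) hB ?_
    (right_mem_Icc.2 hab)
  intro σ hσ r hr
  obtain ⟨M, hM, hle⟩ := hloc σ hσ
  have hslope : ∀ᶠ z in 𝓝[>] σ, slope M σ z < r - C := by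
    rw [hasDerivWithinAt_iff_tendsto_slope, sdiff_singleton_eq_self self_notMem_Ioi] at hM
    exact hM.eventually_lt_const (by linarith)
  refine (((hle.and hslope).and self_mem_nhdsWithin).mono ?_).frequently
  rintro z ⟨⟨hinc, hMz⟩, hz : σ < z⟩
  have hpos : 0 < z - σ := sub_pos.2 hz
  rw [slope_def_field, div_lt_iff₀ hpos] at hMz ⊢
  linarith

lemma abs_sub_le_of_right_increment_approx {f : ℝ → ℝ} {a b C : ℝ} (hab : a ≤ b)
    (hf : ContinuousOn f (Icc a b))
    (hloc : ∀ σ ∈ Ico a b, ∃ M : ℝ → ℝ, HasDerivWithinAt M 0 (Ioi σ) σ ∧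
      ∀ᶠ z in 𝓝[>] σ, |f z - f σ - (M z - M σ)| ≤ C * (z - σ)) :
    |f b - f a| ≤ C * (b - a) := by
  have hup := sub_le_of_right_increment_le hab hf fun σ hσ => by
    obtain ⟨M, hM, hle⟩ := hloc σ hσ
    exact ⟨M, hM, hle.mono fun z hz => by linarith [(abs_le.1 hz).2]⟩
  have hdown := sub_le_of_right_increment_le (f := fun z => -f z) hab hf.neg fun σ hσ => by
    obtain ⟨M, hM, hle⟩ := hloc σ hσ
    exact ⟨fun z => -M z, by simpa using hM.fun_neg,
      hle.mono fun z hz => by linarith [(abs_le.1 hz).1]⟩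
  exact abs_le.2 ⟨by linarith, hup⟩

lemma ContinuousOn.apply_of_abs_sub_le {α : Type*} [TopologicalSpace α] {F : ℝ → α → ℝ}
    {X : ℝ → α} {s : Set ℝ} {D : ℝ} (hX : ContinuousOn X s) (hF : ∀ σ ∈ s, Continuous (F σ))
    (hlip : ∀ p ∈ s, ∀ q ∈ s, |F q (X q) - F p (X q)| ≤ D * |q - p|) :
    ContinuousOn (fun σ => F σ (X σ)) s := by
  intro σ₀ hσ₀
  have hfrozen : ContinuousWithinAt (fun σ => F σ₀ (X σ)) s σ₀ :=
    (hF σ₀ hσ₀).continuousAt.comp_continuousWithinAt (hX σ₀ hσ₀)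
  have hdrift : Tendsto (fun σ => F σ (X σ) - F σ₀ (X σ)) (𝓝[s] σ₀) (𝓝 0) := by
    refine squeeze_zero_norm' (a := fun σ => D * |σ - σ₀|) ?_ ?_
    · filter_upwards [self_mem_nhdsWithin] with σ hσ using hlip σ₀ hσ₀ σ hσ
    · have hc : Continuous fun σ : ℝ => D * |σ - σ₀| := by fun_prop
      simpa using (hc.tendsto σ₀).mono_left nhdsWithin_le_nhds
  simpa [ContinuousWithinAt] using hfrozen.tendsto.add hdrift

lemma antitoneOn_Icc_of_hasDerivAt_nonpos {f f' : ℝ → ℝ} {a b : ℝ}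
    (hf : ∀ σ ∈ Icc a b, HasDerivAt f (f' σ) σ) (hf' : ∀ σ ∈ Icc a b, f' σ ≤ 0) :
    AntitoneOn f (Icc a b) := by
  refine antitoneOn_of_hasDerivWithinAt_nonpos (f' := f') (convex_Icc a b)
    (fun σ hσ => (hf σ hσ).continuousAt.continuousWithinAt) (fun σ hσ => ?_) fun σ hσ => ?_
  all_goals rw [interior_Icc] at hσ
  exacts [(hf σ (Ioo_subset_Icc_self hσ)).hasDerivWithinAt, hf' σ (Ioo_subset_Icc_self hσ)]

lemma monotoneOn_Icc_of_hasDerivAt_nonneg {f f' : ℝ → ℝ} {a b : ℝ}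
    (hf : ∀ σ ∈ Icc a b, HasDerivAt f (f' σ) σ) (hf' : ∀ σ ∈ Icc a b, 0 ≤ f' σ) :
    MonotoneOn f (Icc a b) := by
  simpa using (antitoneOn_Icc_of_hasDerivAt_nonpos (fun σ hσ => (hf σ hσ).neg)
    fun σ hσ => neg_nonpos.2 (hf' σ hσ)).neg

lemma le_parabola_of_deriv_le {z w w' : ℝ → ℝ} {a b t k : ℝ} (ht : t ∈ Icc a b)
    (hz : ∀ σ ∈ Icc a b, HasDerivAt z (w σ) σ) (hw : ∀ σ ∈ Icc a b, HasDerivAt w (w' σ) σ)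
    (hw' : ∀ σ ∈ Icc a b, w' σ ≤ -k) {σ : ℝ} (hσ : σ ∈ Icc a b) :
    z σ ≤ z t + w t * (σ - t) - k / 2 * (σ - t) ^ 2 := by
  have hslow : AntitoneOn (fun σ => w σ + k * σ) (Icc a b) :=
    antitoneOn_Icc_of_hasDerivAt_nonpos
      (fun σ hσ => (hw σ hσ).fun_add ((hasDerivAt_id' σ).const_mul k))
      fun σ hσ => by linarith [hw' σ hσ]
  set h : ℝ → ℝ := fun σ => z σ - w t * (σ - t) + k / 2 * (σ - t) ^ 2 with h_def
  have hh : ∀ σ ∈ Icc a b, HasDerivAt h ((w σ + k * σ) - (w t + k * t)) σ := by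
    intro σ hσ
    have hlin := (hasDerivAt_id' σ).sub_const t
    refine (((hz σ hσ).fun_sub (hlin.const_mul (w t))).fun_add
      ((hlin.fun_pow 2).const_mul (k / 2))).congr_deriv ?_
    norm_num
    ring
  suffices h σ ≤ h t by simp only [h_def, sub_self] at this; linarith
  rcases le_total t σ with htσ | hσt
  · refine antitoneOn_Icc_of_hasDerivAt_nonpos (a := t) (b := b)
      (fun τ hτ => hh τ ⟨ht.1.trans hτ.1, hτ.2⟩) (fun τ hτ => ?_) ⟨le_rfl, ht.2⟩ ⟨htσ, hσ.2⟩ htσ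
    exact sub_nonpos.2 (hslow ht ⟨ht.1.trans hτ.1, hτ.2⟩ hτ.1)
  · refine monotoneOn_Icc_of_hasDerivAt_nonneg (a := a) (b := t)
      (fun τ hτ => hh τ ⟨hτ.1, hτ.2.trans ht.2⟩) (fun τ hτ => ?_) ⟨hσ.1, hσt⟩ ⟨ht.1, le_rfl⟩ hσt
    exact sub_nonneg.2 (hslow ⟨hτ.1, hτ.2.trans ht.2⟩ ht hτ.2)

lemma mul_abs_sub_le_of_parabola {z w w' : ℝ → ℝ} {a b t k : ℝ} (hk : 0 ≤ k) (ht : t ∈ Icc a b)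
    (hz : ∀ σ ∈ Icc a b, HasDerivAt z (w σ) σ) (hw : ∀ σ ∈ Icc a b, HasDerivAt w (w' σ) σ)
    (hw' : ∀ σ ∈ Icc a b, w' σ ≤ -(k / 2)) (hz₀ : ∀ σ ∈ Icc a b, 0 ≤ z σ)
    {p q : ℝ} (hp : p ∈ Icc a b) (hq : q ∈ Icc a b) :
    k * |q - p| ≤ 4 * √(w t ^ 2 + k * z t) := by
  have hdev : ∀ σ ∈ Icc a b, |k / 2 * (σ - t) - w t| ≤ √(w t ^ 2 + k * z t) := fun σ hσ => by
    have := le_parabola_of_deriv_le ht hz hw hw' hσ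
    exact Real.abs_le_sqrt (by nlinarith [mul_nonneg hk (hz₀ σ hσ)])
  calc k * |q - p| = 2 * |(k / 2 * (q - t) - w t) - (k / 2 * (p - t) - w t)| := by
        rw [show (k / 2 * (q - t) - w t) - (k / 2 * (p - t) - w t) = k / 2 * (q - p) by ring,
          abs_mul, abs_of_nonneg (by positivity : 0 ≤ k / 2)]
        ring
    _ ≤ 2 * (|k / 2 * (q - t) - w t| + |k / 2 * (p - t) - w t|) := by gcongr; exact abs_sub _ _
    _ ≤ 4 * √(w t ^ 2 + k * z t) := by linarith [hdev q hq, hdev p hp]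

lemma sq_le_sq3 (v : V3) (i : Fin 3) : v i ^ 2 ≤ sq3 v :=
  Finset.single_le_sum (f := fun j => v j ^ 2) (fun _ _ => sq_nonneg _) (Finset.mem_univ i)

lemma abs_pd_le_gradNorm (i : Fin 3) (f : V3 → ℝ) (y : V3) : |pd i f y| ≤ gradNorm f y := by
  rw [gradNorm, ← Real.sqrt_sq_eq_abs]
  exact Real.sqrt_le_sqrt <|
    Finset.single_le_sum (f := fun j => pd j f y ^ 2) (fun _ _ => sq_nonneg _) (Finset.mem_univ i)

lemma fderiv_apply_eq_sum_pd (f : V3 → ℝ) (y u : V3) :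
    fderiv ℝ f y u = ∑ i, u i * pd i f y := by
  conv_lhs => rw [pi_eq_sum_univ' u]
  simp [pd]

lemma DifferentiableAt.hasDerivAt_comp_pd {f : V3 → ℝ} {X : ℝ → V3} {u : V3} {σ : ℝ}
    (hf : DifferentiableAt ℝ f (X σ)) (hX : HasDerivAt X u σ) :
    HasDerivAt (fun z => f (X z)) (∑ i, u i * pd i f (X σ)) σ := by
  rw [← fderiv_apply_eq_sum_pd]
  exact hf.hasFDerivAt.comp_hasDerivAt σ hX

lemma hasDerivAt_sq3 {V : ℝ → V3} {u : V3} {σ : ℝ} (hV : HasDerivAt V u σ) :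
    HasDerivAt (fun z => sq3 (V z)) (∑ i, 2 * V σ i * u i) σ := by
  refine (HasDerivAt.fun_sum fun i _ => ((hasDerivAt_pi.1 hV i).fun_pow 2)).congr_deriv ?_
  simp

lemma abs_le_mul_of_eq_zero_of_gradNorm_le {f : V3 → ℝ} (hf : Differentiable ℝ f) {c : ℝ}
    (hzero : ∀ y : V3, y 2 = 0 → f y = 0) (hgrad : ∀ y : V3, 0 ≤ y 2 → gradNorm f y ≤ c)
    {y : V3} (hy : 0 ≤ y 2) : |f y| ≤ c * y 2 := by
  have hpath : ∀ r : ℝ, HasDerivAt (fun r => f (Function.update y 2 r))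
      (pd 2 f (Function.update y 2 r)) r :=
    fun r => (hf _).hasFDerivAt.comp_hasDerivAt r (hasDerivAt_update y 2 r)
  have key := (convex_Icc 0 (y 2)).norm_image_sub_le_of_norm_hasDerivWithin_le
    (fun r _ => (hpath r).hasDerivWithinAt)
    (fun r hr => (abs_pd_le_gradNorm 2 f _).trans (hgrad _ (by simpa using hr.1)))
    (left_mem_Icc.2 hy) (right_mem_Icc.2 hy)
  simpa [hzero, abs_of_nonneg hy] using key

def force (g : ℝ) (Φ : V3 → ℝ) (Ψ : ℝ → V3 → ℝ) (s : ℝ) (y : V3) : V3 :=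
  fun i => -(pd i (Ψ s) y) - pd i Φ y - (if i = 2 then g else 0)

lemma force_two_le {g a b : ℝ} {Φ : V3 → ℝ} {Ψ : ℝ → V3 → ℝ} {s : ℝ} {y : V3}
    (hΦ : gradNorm Φ y ≤ a) (hΨ : gradNorm (Ψ s) y ≤ b) (hab : a + b ≤ g / 2) :
    force g Φ Ψ s y 2 ≤ -(g / 2) := by
  have hΦ₂ := (abs_le.1 ((abs_pd_le_gradNorm 2 Φ y).trans hΦ)).1
  have hΨ₂ := (abs_le.1 ((abs_pd_le_gradNorm 2 (Ψ s) y).trans hΨ)).1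
  simp only [force, if_pos]
  linarith

def dynEnergy (g : ℝ) (Φ : V3 → ℝ) (Ψ : ℝ → V3 → ℝ) (s : ℝ) (y u : V3) : ℝ :=
  sq3 u + 2 * Φ y + 2 * Ψ s y + 2 * g * y 2

lemma sq3_add_le_dynEnergy {g a b : ℝ} {Φ : V3 → ℝ} {Ψ : ℝ → V3 → ℝ} {s : ℝ} {y u : V3}
    (hy : 0 ≤ y 2) (hΦ : |Φ y| ≤ a * y 2) (hΨ : |Ψ s y| ≤ b * y 2) (hab : a + b ≤ g / 2) :
    sq3 u + g * y 2 ≤ dynEnergy g Φ Ψ s y u := by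
  have := mul_le_mul_of_nonneg_right hab hy
  unfold dynEnergy
  linarith [(abs_le.1 hΦ).1, (abs_le.1 hΨ).1]

lemma hasDerivAt_dynEnergy_freeze {g : ℝ} {Φ : V3 → ℝ} {Ψ : ℝ → V3 → ℝ} {X V : ℝ → V3} {σ : ℝ}
    (hΦ : DifferentiableAt ℝ Φ (X σ)) (hΨ : DifferentiableAt ℝ (Ψ σ) (X σ))
    (hX : HasDerivAt X (V σ) σ) (hV : HasDerivAt V (force g Φ Ψ σ (X σ)) σ) :
    HasDerivAt (fun z => dynEnergy g Φ Ψ σ (X z) (V z)) 0 σ := by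
  refine ((((hasDerivAt_sq3 hV).fun_add ((hΦ.hasDerivAt_comp_pd hX).const_mul 2)).fun_add
    ((hΨ.hasDerivAt_comp_pd hX).const_mul 2)).fun_add
    ((hasDerivAt_pi.1 hX 2).const_mul (2 * g))).congr_deriv ?_
  simp [force, Fin.sum_univ_three]
  ring

lemma abs_dynEnergy_sub_le {g D a b : ℝ} {Φ : V3 → ℝ} {Ψ : ℝ → V3 → ℝ} {X V : ℝ → V3}
    (hΦ : Differentiable ℝ Φ) (hΨ : ∀ s, Differentiable ℝ (Ψ s))
    (hΨlip : ∀ y : V3, 0 ≤ y 2 → ∀ p ∈ Icc a b, ∀ q ∈ Icc a b, |Ψ q y - Ψ p y| ≤ D * |q - p|)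
    (hX : ∀ σ ∈ Icc a b, HasDerivAt X (V σ) σ)
    (hV : ∀ σ ∈ Icc a b, HasDerivAt V (force g Φ Ψ σ (X σ)) σ)
    (hX₂ : ∀ σ ∈ Icc a b, 0 ≤ X σ 2) {p q : ℝ} (hp : p ∈ Icc a b) (hq : q ∈ Icc a b) :
    |dynEnergy g Φ Ψ q (X q) (V q) - dynEnergy g Φ Ψ p (X p) (V p)| ≤ 2 * D * |q - p| := by
  wlog hpq : p ≤ q generalizing p q
  · rw [abs_sub_comm, abs_sub_comm q]
    exact this hq hp (le_of_not_ge hpq)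
  have hXc : ContinuousOn X (Icc a b) := fun σ hσ => (hX σ hσ).continuousAt.continuousWithinAt
  have hVc : ContinuousOn V (Icc a b) := fun σ hσ => (hV σ hσ).continuousAt.continuousWithinAt
  have hΨc : ContinuousOn (fun σ => Ψ σ (X σ)) (Icc a b) :=
    hXc.apply_of_abs_sub_le (fun σ _ => (hΨ σ).continuous)
      fun p hp q hq => hΨlip (X q) (hX₂ q hq) p hp q hq
  have hEc : ContinuousOn (fun σ => dynEnergy g Φ Ψ σ (X σ) (V σ)) (Icc a b) := by
    have hsq3 : Continuous sq3 := by unfold sq3; fun_prop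
    exact (((hsq3.comp_continuousOn hVc).add
      (continuousOn_const.mul (hΦ.continuous.comp_continuousOn hXc))).add
      (continuousOn_const.mul hΨc)).add
      (continuousOn_const.mul ((continuous_apply 2).comp_continuousOn hXc))
  rw [abs_of_nonneg (sub_nonneg.2 hpq)]
  have hsub : Icc p q ⊆ Icc a b := Icc_subset_Icc hp.1 hq.2
  refine abs_sub_le_of_right_increment_approx hpq (hEc.mono hsub) fun σ hσ => ?_
  have hσI : σ ∈ Icc a b := hsub (Ico_subset_Icc_self hσ)
  refine ⟨fun z => dynEnergy g Φ Ψ σ (X z) (V z),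
    (hasDerivAt_dynEnergy_freeze (hΦ _) (hΨ σ _) (hX σ hσI) (hV σ hσI)).hasDerivWithinAt, ?_⟩
  filter_upwards [Ioc_mem_nhdsGT_of_mem ⟨le_rfl, hσ.2⟩] with z hz
  have hzI : z ∈ Icc a b := hsub ⟨hσ.1.trans hz.1.le, hz.2⟩
  have hdrift := hΨlip (X z) (hX₂ z hzI) σ hσI z hzI
  rw [abs_of_pos (sub_pos.2 hz.1)] at hdrift
  calc _ = |2 * (Ψ z (X z) - Ψ σ (X z))| := by simp only [dynEnergy]; ring_nf
    _ ≤ 2 * D * (z - σ) := by rw [abs_mul, abs_two]; linarith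

lemma half_sub_le_of_mul_sub_le {g D A r e₀ e : ℝ} (hg : 0 < g) (hr : r ^ 2 ≤ A) (hA : A ≤ e₀)
    (h : g * (e₀ - e) ≤ 8 * D * r) : A / 2 - 64 * D ^ 2 / g ^ 2 ≤ e := by
  have hamgm := two_mul_le_add_sq (8 * D / g) (r / 2)
  have hdrop : e₀ - e ≤ 2 * (8 * D / g) * (r / 2) := by
    rw [show 2 * (8 * D / g) * (r / 2) = 8 * D * r / g by ring, le_div_iff₀ hg]
    linarith
  have hsq : (8 * D / g) ^ 2 = 64 * D ^ 2 / g ^ 2 := by ring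
  nlinarith [sq_nonneg r]

theorem weight_along_characteristics_general
    (g β T D : ℝ) (hg : 0 < g) (hβ : 0 < β) (hD : 0 ≤ D)
    (Φ : V3 → ℝ) (Ψ Ψt : ℝ → V3 → ℝ)
    (hΦdiff : Differentiable ℝ Φ)
    (hΨdiff : ∀ s, Differentiable ℝ (Ψ s))
    (hΨt : ∀ s ∈ Set.Icc (0:ℝ) T, ∀ y : V3, 0 ≤ y 2 →
      HasDerivAt (fun σ => Ψ σ y) (Ψt s y) s)
    (hΦbdry : ∀ y : V3, y 2 = 0 → Φ y = 0)
    (hΨbdry : ∀ s (y : V3), y 2 = 0 → Ψ s y = 0)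
    -- ‖∇ₓΦ‖_∞ + sup_s ‖∇ₓΨ(s)‖_∞ ≤ g/2
    (a b : ℝ)
    (hΦgrad : ∀ y : V3, 0 ≤ y 2 → gradNorm Φ y ≤ a)
    (hΨgrad : ∀ s ∈ Set.Icc (0:ℝ) T, ∀ y : V3, 0 ≤ y 2 → gradNorm (Ψ s) y ≤ b)
    (hab : a + b ≤ g / 2)
    -- |∂ₜΨ| ≤ D
    (hΨtD : ∀ s ∈ Set.Icc (0:ℝ) T, ∀ y : V3, 0 ≤ y 2 → |Ψt s y| ≤ D)
    -- the characteristic through (t,x,v), staying in {x₃ ≥ 0}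
    (t τB τF : ℝ) (hτB : 0 ≤ τB) (hτF : 0 ≤ τF)
    (hsub : Set.Icc (t - τB) (t + τF) ⊆ Set.Icc 0 T)
    (x v : V3) (hx : 0 ≤ x 2)
    (X V : ℝ → V3) (hXt : X t = x) (hVt : V t = v)
    (hode : ∀ s ∈ Set.Icc (t - τB) (t + τF),
      HasDerivAt X (V s) s ∧
      HasDerivAt V
        (fun i => -(pd i (Ψ s) (X s)) - pd i Φ (X s) - (if i = 2 then g else 0)) s ∧
      0 ≤ X s 2) :
    ∀ s ∈ Set.Icc (t - τB) (t + τF), ∀ s' ∈ Set.Icc (t - τB) (t + τF),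
      -- (a) ratio bound
      wdynW β g Φ Ψ s' (X s') (V s') / wdynW β g Φ Ψ s (X s) (V s)
          ≤ Real.exp (8 * β / g * D * Real.sqrt ((v 2) ^ 2 + g * x 2)) ∧
      -- (b) Gaussian lower bound for the weight
      (wdynW β g Φ Ψ s (X s) (V s))⁻¹
          ≤ Real.exp (64 * β / g ^ 2 * D ^ 2)
              * Real.exp (-(β / 2) * sq3 v) * Real.exp (-(β / 2) * g * x 2) := by
  set I := Icc (t - τB) (t + τF)
  have htI : t ∈ I := ⟨by linarith, by linarith⟩
  have hX : ∀ σ ∈ I, HasDerivAt X (V σ) σ := fun σ hσ => (hode σ hσ).1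
  have hV : ∀ σ ∈ I, HasDerivAt V (force g Φ Ψ σ (X σ)) σ := fun σ hσ => (hode σ hσ).2.1
  have hX₂ : ∀ σ ∈ I, 0 ≤ X σ 2 := fun σ hσ => (hode σ hσ).2.2
  set r := √(v 2 ^ 2 + g * x 2)
  have hspan : ∀ p ∈ I, ∀ q ∈ I, g * |q - p| ≤ 4 * r := fun p hp q hq => by
    simpa [hXt, hVt] using mul_abs_sub_le_of_parabola hg.le htI
      (fun σ hσ => hasDerivAt_pi.1 (hX σ hσ) 2) (fun σ hσ => hasDerivAt_pi.1 (hV σ hσ) 2)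
      (fun σ hσ => force_two_le (hΦgrad _ (hX₂ σ hσ)) (hΨgrad σ (hsub hσ) _ (hX₂ σ hσ)) hab)
      hX₂ hp hq
  have hΨlip : ∀ y : V3, 0 ≤ y 2 → ∀ p ∈ I, ∀ q ∈ I, |Ψ q y - Ψ p y| ≤ D * |q - p| :=
    fun y hy p hp q hq => by
      simpa using (convex_Icc 0 T).norm_image_sub_le_of_norm_hasDerivWithin_le
        (fun σ hσ => (hΨt σ hσ y hy).hasDerivWithinAt) (fun σ hσ => hΨtD σ hσ y hy)
        (hsub hp) (hsub hq)
  set E := fun σ => dynEnergy g Φ Ψ σ (X σ) (V σ)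
  have hosc : ∀ p ∈ I, ∀ q ∈ I, g * (E q - E p) ≤ 8 * D * r := fun p hp q hq =>
    calc g * (E q - E p) ≤ g * (2 * D * |q - p|) := by
          gcongr
          exact (le_abs_self _).trans (abs_dynEnergy_sub_le hΦdiff hΨdiff hΨlip hX hV hX₂ hp hq)
      _ = 2 * D * (g * |q - p|) := by ring
      _ ≤ 2 * D * (4 * r) := mul_le_mul_of_nonneg_left (hspan p hp q hq) (by positivity)
      _ = 8 * D * r := by ring
  have hEt : sq3 v + g * x 2 ≤ E t := by
    simpa [E, hXt, hVt] using sq3_add_le_dynEnergy hx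
      (abs_le_mul_of_eq_zero_of_gradNorm_le hΦdiff hΦbdry hΦgrad hx)
      (abs_le_mul_of_eq_zero_of_gradNorm_le (hΨdiff t) (hΨbdry t) (hΨgrad t (hsub htI)) hx) hab
  intro s hs s' hs'
  have hw : ∀ σ, wdynW β g Φ Ψ σ (X σ) (V σ) = exp (β * E σ) := fun σ => rfl
  constructor
  · rw [hw, hw, ← exp_sub, exp_le_exp, ← mul_sub,
      show 8 * β / g * D * r = β * (8 * D * r / g) by ring]
    gcongr
    rw [le_div_iff₀ hg]
    linarith [hosc s hs s' hs']
  · have hr : r ^ 2 ≤ sq3 v + g * x 2 := by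
      rw [sq_sqrt (by positivity)]
      linarith [sq_le_sq3 v 2]
    have hlow := half_sub_le_of_mul_sub_le hg hr hEt (hosc s hs t htI)
    rw [hw, ← exp_neg, ← exp_add, ← exp_add, exp_le_exp]
    linear_combination β * hlow

/-- **Gaussian weight estimates along dynamic characteristics.** -/
theorem weight_along_characteristics
    (g β T D : ℝ) (hg : 0 < g) (hβ : 0 < β) (hT : 0 < T) (hD : 0 ≤ D)
    (Φ : V3 → ℝ) (Ψ Ψt : ℝ → V3 → ℝ)
    (hΦdiff : Differentiable ℝ Φ)
    (hΨdiff : ∀ s, Differentiable ℝ (Ψ s))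
    (hΨt : ∀ s ∈ Set.Icc (0:ℝ) T, ∀ y : V3, 0 ≤ y 2 →
      HasDerivAt (fun σ => Ψ σ y) (Ψt s y) s)
    (hΦbdry : ∀ y : V3, y 2 = 0 → Φ y = 0)
    (hΨbdry : ∀ s (y : V3), y 2 = 0 → Ψ s y = 0)
    -- ‖∇ₓΦ‖_∞ + sup_s ‖∇ₓΨ(s)‖_∞ ≤ g/2
    (a b : ℝ)
    (hΦgrad : ∀ y : V3, 0 ≤ y 2 → gradNorm Φ y ≤ a)
    (hΨgrad : ∀ s ∈ Set.Icc (0:ℝ) T, ∀ y : V3, 0 ≤ y 2 → gradNorm (Ψ s) y ≤ b)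
    (hab : a + b ≤ g / 2)
    -- |∂ₜΨ| ≤ D
    (hΨtD : ∀ s ∈ Set.Icc (0:ℝ) T, ∀ y : V3, 0 ≤ y 2 → |Ψt s y| ≤ D)
    -- the characteristic through (t,x,v), staying in {x₃ ≥ 0}
    (t τB τF : ℝ) (hτB : 0 ≤ τB) (hτF : 0 ≤ τF)
    (hsub : Set.Icc (t - τB) (t + τF) ⊆ Set.Icc 0 T)
    (x v : V3) (hx : 0 ≤ x 2)
    (X V : ℝ → V3) (hXt : X t = x) (hVt : V t = v)
    (hode : ∀ s ∈ Set.Icc (t - τB) (t + τF),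
      HasDerivAt X (V s) s ∧
      HasDerivAt V
        (fun i => -(pd i (Ψ s) (X s)) - pd i Φ (X s) - (if i = 2 then g else 0)) s ∧
      0 ≤ X s 2) :
    ∀ s ∈ Set.Icc (t - τB) (t + τF), ∀ s' ∈ Set.Icc (t - τB) (t + τF),
      -- (a) ratio bound
      wdynW β g Φ Ψ s' (X s') (V s') / wdynW β g Φ Ψ s (X s) (V s)
          ≤ Real.exp (8 * β / g * D * Real.sqrt ((v 2) ^ 2 + g * x 2)) ∧
      -- (b) Gaussian lower bound for the weight
      (wdynW β g Φ Ψ s (X s) (V s))⁻¹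
          ≤ Real.exp (64 * β / g ^ 2 * D ^ 2)
              * Real.exp (-(β / 2) * sq3 v) * Real.exp (-(β / 2) * g * x 2) :=
  weight_along_characteristics_general g β T D hg hβ hD Φ Ψ Ψt hΦdiff hΨdiff hΨt hΦbdry hΨbdry a b
    hΦgrad hΨgrad hab hΨtD t τB τF hτB hτF hsub x v hx X V hXt hVt hode

end
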